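/- (Two-structure non-ideal case, influence of a point in both structures) Let b^{k₁}, b^{k₂} ∈ {0,1}^n have supports S₁, S₂ with |S₁| = k₁, |S₂| = k₂, |S₁ ∩ S₂| = α₁ > p, and suppose max(k₁,k₂) < n. Define f(b) = 0 iff ‖b‖₁ ≤ p or b ≼ b^{k₁} or b ≼ b^{k₂}. Then for a coordinate i ∈ S₁ ∩ S₂, Inf_i^q[f] = (C(n-1,p) - C(k₁-1,p) - C(k₂-1,p) + C(α₁-1,p)) q^p (1-q)^{n-p-1}. -/

import Mathlib

open Finset

/-!
Pair every `b` with `b i = false` with its flip `b ⊕ eᵢ`: a pair contributes to the influence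
only when `f` differs on it, and then it contributes `μ(b) + μ(b ⊕ eᵢ) = q^|b| (1-q)^(n-|b|-1)`.
As `i` lies in both supports, flipping `i` does not change whether `b` lies below `b^{k₁}` or
`b^{k₂}`, so `b` is pivotal exactly when `|b| = p` and `b` lies below neither structure.
Such `b` are the `p`-subsets of `[n] ∖ {i}` contained in neither support minus `i`, and
inclusion–exclusion counts them.
-/

/-- Hamming weight of a Boolean vector. -/
def wt {n : ℕ} (b : Fin n → Bool) : ℕ := (Finset.univ.filter fun i => b i = true).card

/-- Bernoulli(q) measure of a single vertex of the cube. -/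
noncomputable def mu {n : ℕ} (q : ℝ) (b : Fin n → Bool) : ℝ :=
  q ^ wt b * (1 - q) ^ (n - wt b)

/-- Flip the `i`-th bit. -/
def bflip {n : ℕ} (i : Fin n) (b : Fin n → Bool) : Fin n → Bool :=
  Function.update b i (!(b i))

/-- Bernoulli(q) weighted influence of coordinate `i` on `f`. -/
noncomputable def Infl {n : ℕ} (q : ℝ) (f : (Fin n → Bool) → Bool) (i : Fin n) : ℝ :=
  ∑ b : Fin n → Bool, if f b ≠ f (bflip i b) then mu q b else 0

/-- The monotone Boolean function of two (possibly overlapping) structures. -/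
def fTwo {n : ℕ} (p : ℕ) (b1 b2 : Fin n → Bool) (b : Fin n → Bool) : Bool :=
  if wt b ≤ p ∨ (∀ i, b i ≤ b1 i) ∨ (∀ i, b i ≤ b2 i) then false else true

section PowersetCard

variable {α : Type*} [DecidableEq α]

lemma filter_subset_powersetCard (p : ℕ) (U S : Finset α) :
    {A ∈ U.powersetCard p | A ⊆ S} = (U ∩ S).powersetCard p := by
  ext A
  simp only [mem_filter, mem_powersetCard, subset_inter_iff]
  tauto

lemma card_filter_not_subset_and_not_subset (p : ℕ) (U S T : Finset α) :
    #{A ∈ U.powersetCard p | ¬A ⊆ S ∧ ¬A ⊆ T} + (#(U ∩ S)).choose p + (#(U ∩ T)).choose p =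
      (#U).choose p + (#(U ∩ (S ∩ T))).choose p := by
  have hcompl := (U.powersetCard p).card_filter_add_card_filter_not
    (fun A => A ⊆ S ∨ A ⊆ T)
  have hunion := card_union_add_card_inter {A ∈ U.powersetCard p | A ⊆ S}
    {A ∈ U.powersetCard p | A ⊆ T}
  simp only [not_or] at hcompl
  rw [← filter_or, ← filter_and] at hunion
  simp only [← subset_inter_iff, filter_subset_powersetCard, card_powersetCard] at hcompl hunion
  omega

end PowersetCard

section Cube

variable {n : ℕ}

def bsupp (b : Fin n → Bool) : Finset (Fin n) := {j | b j = true}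

lemma le_iff_bsupp_subset {b c : Fin n → Bool} : b ≤ c ↔ bsupp b ⊆ bsupp c := by
  simp [Pi.le_def, Bool.le_iff_imp, subset_iff, bsupp]

lemma bsupp_indicator (A : Finset (Fin n)) : bsupp (fun j => decide (j ∈ A)) = A := by
  ext j; simp [bsupp]

lemma indicator_bsupp (b : Fin n → Bool) : (fun j => decide (j ∈ bsupp b)) = b := by
  funext j; simp [bsupp]

lemma bflip_bflip (i : Fin n) (b : Fin n → Bool) : bflip i (bflip i b) = b := by
  funext j
  by_cases hj : j = i <;> simp [bflip, Function.update_apply, hj]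

lemma bflip_apply_self (i : Fin n) (b : Fin n → Bool) : bflip i b i = !(b i) := by
  simp [bflip]

lemma bsupp_bflip_of_eq_false {i : Fin n} {b : Fin n → Bool} (h : b i = false) :
    bsupp (bflip i b) = insert i (bsupp b) := by
  ext j
  by_cases hj : j = i <;> simp [bsupp, bflip, Function.update_apply, hj, h]

lemma wt_bflip_of_eq_false {i : Fin n} {b : Fin n → Bool} (h : b i = false) :
    wt (bflip i b) = wt b + 1 := by
  have hi : i ∉ bsupp b := by simp [bsupp, h]
  exact (congrArg card (bsupp_bflip_of_eq_false h)).trans (card_insert_of_notMem hi)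

lemma bsupp_bflip_subset_iff {i : Fin n} {b c : Fin n → Bool} (hb : b i = false)
    (hc : c i = true) : bsupp (bflip i b) ⊆ bsupp c ↔ bsupp b ⊆ bsupp c := by
  have hi : i ∈ bsupp c := by simp [bsupp, hc]
  rw [bsupp_bflip_of_eq_false hb, insert_subset_iff, and_iff_right hi]

lemma mu_add_mu_bflip (q : ℝ) {i : Fin n} {b : Fin n → Bool} (h : b i = false) :
    mu q b + mu q (bflip i b) = q ^ wt b * (1 - q) ^ (n - wt b - 1) := by
  have hflip := wt_bflip_of_eq_false h
  have hle : wt (bflip i b) ≤ n :=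
    (card_le_univ (bsupp (bflip i b))).trans_eq (Fintype.card_fin n)
  obtain ⟨m, hm⟩ : ∃ m, n - wt b = m + 1 := ⟨n - wt b - 1, by omega⟩
  rw [mu, mu, hflip, hm, show n - (wt b + 1) = m by omega, Nat.add_sub_cancel]
  ring

lemma sum_eq_sum_add_bflip (i : Fin n) (g : (Fin n → Bool) → ℝ) :
    ∑ b, g b = ∑ b with b i = false, (g b + g (bflip i b)) := by
  rw [sum_add_distrib, ← sum_filter_add_sum_filter_not univ (fun b => b i = false) g]
  congr 1
  refine sum_nbij' (bflip i) (bflip i) ?_ ?_ (fun b _ => bflip_bflip i b)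
    (fun b _ => bflip_bflip i b) (fun b _ => by rw [bflip_bflip])
  all_goals intro b hb; simpa [bflip_apply_self] using hb

lemma Infl_eq_sum_pivotal (q : ℝ) (f : (Fin n → Bool) → Bool) (i : Fin n) :
    Infl q f i = ∑ b with b i = false ∧ f b ≠ f (bflip i b),
      q ^ wt b * (1 - q) ^ (n - wt b - 1) := by
  rw [Infl, sum_eq_sum_add_bflip i, ← filter_filter, sum_filter (fun b => f b ≠ f (bflip i b))]
  refine sum_congr rfl fun b hb => ?_
  rw [bflip_bflip, ← mu_add_mu_bflip q (mem_filter.1 hb).2]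
  by_cases hf : f b = f (bflip i b) <;> simp [hf, eq_comm]

lemma card_filter_bsupp_eq_card_filter_powersetCard (i : Fin n) (p : ℕ)
    (P : Finset (Fin n) → Prop) [DecidablePred P] :
    #{b : Fin n → Bool | b i = false ∧ wt b = p ∧ P (bsupp b)} =
      #{A ∈ (univ.erase i).powersetCard p | P A} := by
  refine card_nbij' bsupp (fun A j => decide (j ∈ A)) ?_ ?_ (fun b _ => indicator_bsupp b)
    (fun A _ => bsupp_indicator A)
  · intro b hb
    obtain ⟨-, hbi, hwt, hP⟩ := mem_filter.1 (mem_coe.1 hb)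
    refine mem_coe.2 (mem_filter.2 ⟨mem_powersetCard.2 ⟨fun j hj => ?_, hwt⟩, hP⟩)
    refine mem_erase.2 ⟨?_, mem_univ j⟩
    rintro rfl
    simp [bsupp, hbi] at hj
  · intro A hA
    obtain ⟨hA, hPA⟩ := mem_filter.1 (mem_coe.1 hA)
    obtain ⟨hAU, hcard⟩ := mem_powersetCard.1 hA
    refine mem_coe.2 (mem_filter.2 ⟨mem_univ _, ?_, ?_, ?_⟩)
    · simpa using fun h => (mem_erase.1 (hAU h)).1 rfl
    · exact (congrArg card (bsupp_indicator A)).trans hcard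
    · rwa [bsupp_indicator]

end Cube

section TwoStructures

variable {n p : ℕ} {b1 b2 : Fin n → Bool} {i : Fin n}

def fTwoPivots (p : ℕ) (b1 b2 : Fin n → Bool) (i : Fin n) : Finset (Fin n → Bool) :=
  {b | b i = false ∧ wt b = p ∧ ¬bsupp b ⊆ bsupp b1 ∧ ¬bsupp b ⊆ bsupp b2}

lemma fTwo_eq (b : Fin n → Bool) :
    fTwo p b1 b2 b = !decide (wt b ≤ p ∨ bsupp b ⊆ bsupp b1 ∨ bsupp b ⊆ bsupp b2) := by
  simp only [fTwo, ← Pi.le_def, le_iff_bsupp_subset]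
  split_ifs <;> simp_all

lemma fTwo_ne_fTwo_bflip_iff {b : Fin n → Bool} (h1 : b1 i = true) (h2 : b2 i = true)
    (hb : b i = false) :
    fTwo p b1 b2 b ≠ fTwo p b1 b2 (bflip i b) ↔
      wt b = p ∧ ¬bsupp b ⊆ bsupp b1 ∧ ¬bsupp b ⊆ bsupp b2 := by
  simp only [fTwo_eq, wt_bflip_of_eq_false hb, bsupp_bflip_subset_iff hb h1,
    bsupp_bflip_subset_iff hb h2]
  grind

lemma Infl_fTwo (q : ℝ) (h1 : b1 i = true) (h2 : b2 i = true) :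
    Infl q (fTwo p b1 b2) i = #(fTwoPivots p b1 b2 i) * (q ^ p * (1 - q) ^ (n - p - 1)) := by
  rw [Infl_eq_sum_pivotal, fTwoPivots,
    filter_congr fun b _ => and_congr_right fun hb => fTwo_ne_fTwo_bflip_iff h1 h2 hb,
    ← nsmul_eq_mul, ← sum_const]
  exact sum_congr rfl fun b hb => by rw [(mem_filter.1 hb).2.2.1]

lemma card_fTwoPivots_add (h1 : b1 i = true) (h2 : b2 i = true) :
    #(fTwoPivots p b1 b2 i) + (wt b1 - 1).choose p + (wt b2 - 1).choose p =
      (n - 1).choose p + (#{j | b1 j = true ∧ b2 j = true} - 1).choose p := by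
  have hcount := card_filter_not_subset_and_not_subset p (univ.erase i) (bsupp b1) (bsupp b2)
  rw [fTwoPivots, card_filter_bsupp_eq_card_filter_powersetCard i p
    fun A => ¬A ⊆ bsupp b1 ∧ ¬A ⊆ bsupp b2]
  have hi1 : i ∈ bsupp b1 := by simpa [bsupp]
  have hi2 : i ∈ bsupp b2 := by simpa [bsupp]
  simp only [erase_inter, univ_inter] at hcount
  rwa [card_erase_of_mem hi1, card_erase_of_mem hi2,
    card_erase_of_mem (mem_inter.2 ⟨hi1, hi2⟩), card_erase_of_mem (mem_univ i), card_univ,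
    Fintype.card_fin, bsupp, bsupp, ← filter_and] at hcount

end TwoStructures

theorem nonideal_two_both_influence_general {n p k₁ k₂ α₁ : ℕ}
    (q : ℝ)
    (b1 b2 : Fin n → Bool) (hw1 : wt b1 = k₁) (hw2 : wt b2 = k₂)
    (hover : (Finset.univ.filter fun i => b1 i = true ∧ b2 i = true).card = α₁)
    (i : Fin n) (hi1 : b1 i = true) (hi2 : b2 i = true) :
    Infl q (fTwo p b1 b2) i =
      (((n - 1).choose p : ℝ) - ((k₁ - 1).choose p : ℝ) - ((k₂ - 1).choose p : ℝ) +
          ((α₁ - 1).choose p : ℝ)) * q ^ p * (1 - q) ^ (n - p - 1) := by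
  have hcount := card_fTwoPivots_add (p := p) hi1 hi2
  rw [hw1, hw2, hover] at hcount
  have hcount_real : (#(fTwoPivots p b1 b2 i) : ℝ) =
      (n - 1).choose p - (k₁ - 1).choose p - (k₂ - 1).choose p + (α₁ - 1).choose p := by
    have := congrArg (Nat.cast : ℕ → ℝ) hcount
    push_cast at this
    linarith
  rw [Infl_fTwo q hi1 hi2, hcount_real, mul_assoc]

theorem nonideal_two_both_influence {n p k₁ k₂ α₁ : ℕ}
    (hpa : p + 1 ≤ α₁) (ha₁ : α₁ < k₁) (ha₂ : α₁ < k₂) (hk₁ : k₁ < n) (hk₂ : k₂ < n)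
    (q : ℝ) (hq : q ∈ Set.Ioo (0:ℝ) 1)
    (b1 b2 : Fin n → Bool) (hw1 : wt b1 = k₁) (hw2 : wt b2 = k₂)
    (hover : (Finset.univ.filter fun i => b1 i = true ∧ b2 i = true).card = α₁)
    (i : Fin n) (hi1 : b1 i = true) (hi2 : b2 i = true) :
    Infl q (fTwo p b1 b2) i =
      (((n - 1).choose p : ℝ) - ((k₁ - 1).choose p : ℝ) - ((k₂ - 1).choose p : ℝ) +
          ((α₁ - 1).choose p : ℝ)) * q ^ p * (1 - q) ^ (n - p - 1) :=
  nonideal_two_both_influence_general q b1 b2 hw1 hw2 hover i hi1 hi2
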